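/- arXiv:1909.01480 — 2 statements merged into one kernel-verified Lean document; each statement's English description precedes it below -/
import Mathlib

section
/- For every natural number i, the function (x, y) ↦ x^i · ln(y + √(x² + y²)), defined at all points of K₀ other than the origin, is Lebesgue integrable on the reference triangle K₀ = {(x, y) ∈ ℝ² : 0 ≤ x, 0 ≤ y, x + y ≤ 1}. -/
/-!
On `K0` away from the null line `x = 0` we have `x ≤ y + √(x² + y²) ≤ 2` and `0 < x ≤ 1`, so
`|x ^ i * log (y + √(x² + y²))| ≤ |log x| + log 2`. The right-hand side depends on `x` only and is
integrable on `[0, 1] × [0, 1]` because `log` is integrable near `0`.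
-/

open MeasureTheory

/-- The reference triangle K₀ = {(x, y) : 0 ≤ x, 0 ≤ y, x + y ≤ 1}. -/
def K0 : Set (ℝ × ℝ) := {p : ℝ × ℝ | 0 ≤ p.1 ∧ 0 ≤ p.2 ∧ p.1 + p.2 ≤ 1}

open Real Set

theorem MeasureTheory.IntegrableOn.comp_fst_prod {α β E : Type*} [MeasurableSpace α]
    [MeasurableSpace β] [NormedAddCommGroup E] {μ : Measure α} {ν : Measure β} [SFinite μ]
    [SFinite ν] {f : α → E} {s : Set α} {t : Set β} (hf : IntegrableOn f s μ) (ht : ν t ≠ ⊤) :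
    IntegrableOn (fun p : α × β => f p.1) (s ×ˢ t) (μ.prod ν) := by
  have : IsFiniteMeasure (ν.restrict t) := isFiniteMeasure_restrict.2 ht
  rw [IntegrableOn, ← Measure.prod_restrict]
  exact hf.comp_fst _

theorem integrableOn_abs_log_add_const {a b : ℝ} (hab : a ≤ b) (c : ℝ) :
    IntegrableOn (fun x : ℝ => |log x| + c) (Icc a b) := by
  rw [← intervalIntegrable_iff_integrableOn_Icc_of_le hab]
  exact intervalIntegral.intervalIntegrable_log'.abs.add intervalIntegrable_const

theorem abs_log_le_abs_log_add_log {a b t : ℝ} (ha : 0 < a) (hb : 1 ≤ b) (ht : t ∈ Icc a b) :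
    |log t| ≤ |log a| + log b := by
  have hlog_a_le := log_le_log ha ht.1
  have hlog_le_b := log_le_log (ha.trans_le ht.1) ht.2
  have := neg_abs_le (log a)
  have := log_nonneg hb
  rw [abs_le]
  constructor <;> linarith [abs_nonneg (log a)]

theorem le_add_sqrt_sq_add_sq (x : ℝ) {y : ℝ} (hy : 0 ≤ y) : x ≤ y + √(x ^ 2 + y ^ 2) := by
  have : x ≤ √(x ^ 2 + y ^ 2) := le_sqrt_of_sq_le (by nlinarith)
  linarith

theorem sqrt_sq_add_sq_le_add {x y : ℝ} (hx : 0 ≤ x) (hy : 0 ≤ y) : √(x ^ 2 + y ^ 2) ≤ x + y :=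
  sqrt_le_iff.2 ⟨by positivity, by nlinarith⟩

theorem measurableSet_K0 : MeasurableSet K0 := by
  unfold K0
  measurability

theorem K0_subset_Icc_prod_Icc : K0 ⊆ Icc 0 1 ×ˢ Icc 0 1 := by
  rintro p ⟨hx, hy, hxy⟩
  exact ⟨⟨hx, by linarith⟩, hy, by linarith⟩

theorem add_sqrt_mem_Icc_of_mem_K0 {p : ℝ × ℝ} (hp : p ∈ K0) :
    p.2 + √(p.1 ^ 2 + p.2 ^ 2) ∈ Icc p.1 2 := by
  obtain ⟨hx, hy, hxy⟩ := hp
  exact ⟨le_add_sqrt_sq_add_sq _ hy, by linarith [sqrt_sq_add_sq_le_add hx hy]⟩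

theorem norm_pow_mul_log_le_of_mem_K0 (i : ℕ) {p : ℝ × ℝ} (hp : p ∈ K0) (hx : p.1 ≠ 0) :
    ‖p.1 ^ i * log (p.2 + √(p.1 ^ 2 + p.2 ^ 2))‖ ≤ |log p.1| + log 2 := by
  obtain ⟨⟨hx0, hx1⟩, -⟩ := K0_subset_Icc_prod_Icc hp
  rw [norm_mul, norm_pow, Real.norm_eq_abs, Real.norm_eq_abs, abs_of_nonneg hx0]
  exact mul_le_of_le_one_left (abs_nonneg _) (pow_le_one₀ hx0 hx1) |>.trans <|
    abs_log_le_abs_log_add_log (hx0.lt_of_ne' hx) one_le_two (add_sqrt_mem_Icc_of_mem_K0 hp)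

/-- The corner-singular function (x, y) ↦ x^i ln(y + √(x² + y²)) is Lebesgue integrable
on the reference triangle K₀. -/
theorem stmt_14 (i : ℕ) :
    IntegrableOn
      (fun p : ℝ × ℝ => p.1 ^ i * Real.log (p.2 + Real.sqrt (p.1 ^ 2 + p.2 ^ 2)))
      K0 := by
  have hdom : IntegrableOn (fun p : ℝ × ℝ => |log p.1| + log 2) K0 :=
    ((integrableOn_abs_log_add_const zero_le_one _).comp_fst_prod
      measure_Icc_lt_top.ne).mono_set K0_subset_Icc_prod_Icc
  have hfst_ne : ∀ᵐ p : ℝ × ℝ ∂volume, p.1 ≠ 0 :=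
    Measure.quasiMeasurePreserving_fst.ae (volume.ae_ne 0)
  refine hdom.mono' (by fun_prop) ?_
  filter_upwards [ae_restrict_mem measurableSet_K0, ae_restrict_of_ae hfst_ne] with p hp hx
  exact norm_pow_mul_log_le_of_mem_K0 i hp hx
end

section
/- Let p₁, p₂, p₃, p₄ ∈ ℝ² be the vertices, listed in counterclockwise cyclic order, of a strictly convex quadrilateral, i.e., suppose det(p₂ − p₁, p₄ − p₁) > 0, det(p₃ − p₂, p₁ − p₂) > 0, det(p₄ − p₃, p₂ − p₃) > 0, and det(p₁ − p₄, p₃ − p₄) > 0. Define the bilinear map Φ : [0,1]² → ℝ² by Φ(ξ, η) = (1−ξ)(1−η) p₁ + ξ(1−η) p₂ + ξη p₃ + (1−ξ)η p₄, and let J(ξ, η) = det(∂Φ/∂ξ, ∂Φ/∂η) be the determinant of its Jacobian. Then Φ is a bijection from [0,1]² onto the quadrilateral Q = conv{p₁, p₂, p₃, p₄}, J(ξ, η) > 0 for all (ξ, η) ∈ [0,1]², and for every function f : ℝ² → ℝ integrable on Q, ∫_Q f dλ = ∫_{[0,1]²} f(Φ(ξ, η)) · J(ξ, η) d(ξ,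 η). -/
/-!
Since `Φ` is quadratic, `Φ u - Φ v = DΦ((u + v) / 2) (u - v)`, and `det DΦ(ξ, η)` is the
bilinear interpolation of the four corner determinants `D₁, …, D₄` (`Dₖ` the determinant at the
vertex `pₖ`), which are positive by strict convexity. Hence the Jacobian is positive on the
square and `Φ` is injective there.

For surjectivity, write a point of `Q` as `∑ wₖ pₖ` with convex weights. The weights of `Φ(ξ, η)`
are the shape functions `ψₖ(ξ, η)`, and convex weights are of this form exactly when
`w₁ w₃ = w₂ w₄`. The affine dependence `D₃ p₁ + D₁ p₃ = D₄ p₂ + D₂ p₄` lets us shift the weights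
by `t (D₃, -D₄, D₁, -D₂)` without moving the point, and the intermediate value theorem gives a
shift that balances the two products while keeping the weights nonnegative. The integral formula
is then the change of variables formula.
-/

open MeasureTheory Set

namespace BilinearQuad

def det (u w : ℝ × ℝ) : ℝ := u.1 * w.2 - w.1 * u.2

lemma _root_.ContinuousLinearMap.det_eq_det_apply (L : ℝ × ℝ →L[ℝ] ℝ × ℝ) :
    L.det = det (L (1, 0)) (L (0, 1)) := by
  rw [ContinuousLinearMap.det, ← LinearMap.det_toMatrix (Module.Basis.finTwoProd ℝ),
    Matrix.det_fin_two]
  simp [det, LinearMap.toMatrix_apply]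

lemma weighted_sum_pos {w1 w2 w3 w4 D1 D2 D3 D4 : ℝ} (hw1 : 0 ≤ w1) (hw2 : 0 ≤ w2)
    (hw3 : 0 ≤ w3) (hw4 : 0 ≤ w4) (hw : w1 + w2 + w3 + w4 = 1)
    (hD1 : 0 < D1) (hD2 : 0 < D2) (hD3 : 0 < D3) (hD4 : 0 < D4) :
    0 < w1 * D1 + w2 * D2 + w3 * D3 + w4 * D4 := by
  set m := min (min D1 D2) (min D3 D4)
  have hm : 0 < m := lt_min (lt_min hD1 hD2) (lt_min hD3 hD4)
  nlinarith [mul_le_mul_of_nonneg_left (show m ≤ D1 by simp [m]) hw1,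
    mul_le_mul_of_nonneg_left (show m ≤ D2 by simp [m]) hw2,
    mul_le_mul_of_nonneg_left (show m ≤ D3 by simp [m]) hw3,
    mul_le_mul_of_nonneg_left (show m ≤ D4 by simp [m]) hw4]

lemma sub_mul_nonneg_iff {w s t : ℝ} (hs : 0 < s) : 0 ≤ w - t * s ↔ t ≤ w / s := by
  rw [le_div_iff₀ hs, sub_nonneg]

lemma add_mul_nonneg_iff {w s t : ℝ} (hs : 0 < s) : 0 ≤ w + t * s ↔ -(w / s) ≤ t := by
  rw [neg_le, ← sub_mul_nonneg_iff hs, neg_mul, sub_neg_eq_add]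

lemma exists_balanced_shift {w1 w2 w3 w4 s1 s2 s3 s4 : ℝ}
    (hw1 : 0 ≤ w1) (hw2 : 0 ≤ w2) (hw3 : 0 ≤ w3) (hw4 : 0 ≤ w4)
    (hs1 : 0 < s1) (hs2 : 0 < s2) (hs3 : 0 < s3) (hs4 : 0 < s4) :
    ∃ t : ℝ, 0 ≤ w1 + t * s1 ∧ 0 ≤ w2 - t * s2 ∧ 0 ≤ w3 + t * s3 ∧ 0 ≤ w4 - t * s4 ∧
      (w1 + t * s1) * (w3 + t * s3) = (w2 - t * s2) * (w4 - t * s4) := by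
  set tm := -min (w1 / s1) (w3 / s3)
  set tp := min (w2 / s2) (w4 / s4)
  have hlow : ∀ t, tm ≤ t → 0 ≤ w1 + t * s1 ∧ 0 ≤ w3 + t * s3 := fun t ht =>
    ⟨(add_mul_nonneg_iff hs1).2 ((neg_le_neg (min_le_left _ _)).trans ht),
      (add_mul_nonneg_iff hs3).2 ((neg_le_neg (min_le_right _ _)).trans ht)⟩
  have hupp : ∀ t, t ≤ tp → 0 ≤ w2 - t * s2 ∧ 0 ≤ w4 - t * s4 := fun t ht =>
    ⟨(sub_mul_nonneg_iff hs2).2 (ht.trans (min_le_left _ _)),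
      (sub_mul_nonneg_iff hs4).2 (ht.trans (min_le_right _ _))⟩
  have htm : tm ≤ 0 := neg_nonpos.2 (le_min (by positivity) (by positivity))
  have htp : 0 ≤ tp := le_min (by positivity) (by positivity)
  have hvanish_low : (w1 + tm * s1) * (w3 + tm * s3) = 0 := by
    rcases min_choice (w1 / s1) (w3 / s3) with h | h <;> simp only [tm, h] <;> field_simp <;> ring
  have hvanish_upp : (w2 - tp * s2) * (w4 - tp * s4) = 0 := by
    rcases min_choice (w2 / s2) (w4 / s4) with h | h <;> simp only [tp, h] <;> field_simp <;> ring
  obtain ⟨t, ⟨htl, htu⟩, ht⟩ := intermediate_value_Icc (htm.trans htp)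
    (f := fun t => (w1 + t * s1) * (w3 + t * s3) - (w2 - t * s2) * (w4 - t * s4))
    (by fun_prop) (show (0 : ℝ) ∈ Icc _ _ from by
      have := hupp tm (htm.trans htp)
      have := hlow tp (htm.trans htp)
      constructor <;> nlinarith)
  exact ⟨t, (hlow t htl).1, (hupp t htu).1, (hlow t htl).2, (hupp t htu).2, sub_eq_zero.1 ht⟩

section

variable (p1 p2 p3 p4 : ℝ × ℝ)

def bilinMap (x : ℝ × ℝ) : ℝ × ℝ :=
  ((1 - x.1) * (1 - x.2)) • p1 + (x.1 * (1 - x.2)) • p2 + (x.1 * x.2) • p3 +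
    ((1 - x.1) * x.2) • p4

def bilinDeriv (x : ℝ × ℝ) : ℝ × ℝ →L[ℝ] ℝ × ℝ :=
  (ContinuousLinearMap.fst ℝ ℝ ℝ).smulRight ((1 - x.2) • (p2 - p1) + x.2 • (p3 - p4)) +
    (ContinuousLinearMap.snd ℝ ℝ ℝ).smulRight ((1 - x.1) • (p4 - p1) + x.1 • (p3 - p2))

lemma hasFDerivAt_bilinMap (x : ℝ × ℝ) :
    HasFDerivAt (bilinMap p1 p2 p3 p4) (bilinDeriv p1 p2 p3 p4 x) x := by
  have hξ : HasFDerivAt (fun x : ℝ × ℝ => x.1) (ContinuousLinearMap.fst ℝ ℝ ℝ) x :=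
    hasFDerivAt_fst
  have hη : HasFDerivAt (fun x : ℝ × ℝ => x.2) (ContinuousLinearMap.snd ℝ ℝ ℝ) x :=
    hasFDerivAt_snd
  refine ((((hξ.const_sub 1).mul (hη.const_sub 1)).smul_const p1).add
    ((hξ.mul (hη.const_sub 1)).smul_const p2) |>.add ((hξ.mul hη).smul_const p3) |>.add
    (((hξ.const_sub 1).mul hη).smul_const p4)).congr_fderiv ?_
  ext <;>
    simp only [bilinDeriv, ContinuousLinearMap.add_comp, ContinuousLinearMap.comp_apply,
      ContinuousLinearMap.inl_apply, ContinuousLinearMap.inr_apply,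
      ContinuousLinearMap.smulRight_apply, ContinuousLinearMap.coe_fst',
      ContinuousLinearMap.coe_snd', add_apply, neg_apply, smul_apply, smul_neg, neg_smul,
      smul_add, one_smul, zero_smul, smul_eq_mul, mul_zero, mul_one, neg_zero, neg_sub, add_zero,
      zero_add, Prod.fst_add, Prod.snd_add, Prod.smul_fst, Prod.smul_snd, Prod.fst_neg,
      Prod.snd_neg, Prod.fst_sub, Prod.snd_sub] <;>
    ring

lemma bilinMap_sub_bilinMap (u v : ℝ × ℝ) :
    bilinMap p1 p2 p3 p4 u - bilinMap p1 p2 p3 p4 v =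
      bilinDeriv p1 p2 p3 p4 (midpoint ℝ u v) (u - v) := by
  ext <;>
    simp only [bilinMap, bilinDeriv, midpoint_eq_smul_add, invOf_eq_inv, add_apply,
      ContinuousLinearMap.smulRight_apply, ContinuousLinearMap.coe_fst',
      ContinuousLinearMap.coe_snd', smul_add, smul_eq_mul, Prod.fst_add, Prod.snd_add,
      Prod.smul_fst, Prod.smul_snd, Prod.fst_sub, Prod.snd_sub] <;>
    ring

lemma det_bilinDeriv (x : ℝ × ℝ) :
    (bilinDeriv p1 p2 p3 p4 x).det =
      (1 - x.1) * (1 - x.2) * det (p2 - p1) (p4 - p1) +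
        x.1 * (1 - x.2) * det (p3 - p2) (p1 - p2) + x.1 * x.2 * det (p4 - p3) (p2 - p3) +
        (1 - x.1) * x.2 * det (p1 - p4) (p3 - p4) := by
  rw [ContinuousLinearMap.det_eq_det_apply]
  simp only [det, bilinDeriv, add_apply, ContinuousLinearMap.smulRight_apply,
    ContinuousLinearMap.coe_fst', ContinuousLinearMap.coe_snd', smul_add, one_smul, zero_smul,
    add_zero, zero_add, smul_eq_mul, Prod.fst_add, Prod.snd_add, Prod.smul_fst, Prod.smul_snd,
    Prod.fst_sub, Prod.snd_sub]
  ring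

lemma mapsTo_bilinMap :
    MapsTo (bilinMap p1 p2 p3 p4) (Icc (0 : ℝ) 1 ×ˢ Icc (0 : ℝ) 1)
      (convexHull ℝ {p1, p2, p3, p4}) := by
  rintro ⟨ξ, η⟩ ⟨⟨hξ0, hξ1⟩, ⟨hη0, hη1⟩⟩
  have hconv := convex_convexHull ℝ ({p1, p2, p3, p4} : Set (ℝ × ℝ))
  have hmem : ∀ p ∈ ({p1, p2, p3, p4} : Set (ℝ × ℝ)), p ∈ convexHull ℝ {p1, p2, p3, p4} :=
    fun p hp => subset_convexHull ℝ _ hp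
  have h12 := hconv (hmem p1 (by simp)) (hmem p2 (by simp)) (sub_nonneg.2 hξ1) hξ0 (by ring)
  have h43 := hconv (hmem p4 (by simp)) (hmem p3 (by simp)) (sub_nonneg.2 hξ1) hξ0 (by ring)
  convert hconv h12 h43 (sub_nonneg.2 hη1) hη0 (by ring) using 1
  simp only [bilinMap]
  module

lemma bilinMap_of_weights {w1 w2 w3 w4 : ℝ} (hw : w1 + w2 + w3 + w4 = 1)
    (hprod : w1 * w3 = w2 * w4) :
    bilinMap p1 p2 p3 p4 (w2 + w3, w3 + w4) = w1 • p1 + w2 • p2 + w3 • p3 + w4 • p4 := by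
  have e1 : (1 - (w2 + w3)) * (1 - (w3 + w4)) = w1 := by
    linear_combination (w3 - 1) * hw - hprod
  have e2 : (w2 + w3) * (1 - (w3 + w4)) = w2 := by linear_combination (-w3) * hw + hprod
  have e3 : (w2 + w3) * (w3 + w4) = w3 := by linear_combination w3 * hw - hprod
  have e4 : (1 - (w2 + w3)) * (w3 + w4) = w4 := by linear_combination (-w3) * hw + hprod
  simp only [bilinMap, e1, e2, e3, e4]

lemma affine_relation :
    det (p4 - p3) (p2 - p3) • p1 + det (p2 - p1) (p4 - p1) • p3 =
      det (p1 - p4) (p3 - p4) • p2 + det (p3 - p2) (p1 - p2) • p4 := by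
  ext <;>
    simp only [det, Prod.fst_add, Prod.snd_add, Prod.smul_fst, Prod.smul_snd, Prod.fst_sub,
      Prod.snd_sub, smul_eq_mul] <;>
    ring

lemma affine_relation_coeff_sum :
    det (p4 - p3) (p2 - p3) + det (p2 - p1) (p4 - p1) =
      det (p1 - p4) (p3 - p4) + det (p3 - p2) (p1 - p2) := by
  simp only [det, Prod.fst_sub, Prod.snd_sub]
  ring

lemma mem_convexHull_four {q : ℝ × ℝ} (hq : q ∈ convexHull ℝ {p1, p2, p3, p4}) :
    ∃ w1 w2 w3 w4 : ℝ, 0 ≤ w1 ∧ 0 ≤ w2 ∧ 0 ≤ w3 ∧ 0 ≤ w4 ∧ w1 + w2 + w3 + w4 = 1 ∧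
      q = w1 • p1 + w2 • p2 + w3 • p3 + w4 • p4 := by
  rw [show ({p1, p2, p3, p4} : Set (ℝ × ℝ)) = {p1, p2} ∪ {p3, p4} by
      rw [insert_union, singleton_union],
    convexHull_union (insert_nonempty _ _) (insert_nonempty _ _), convexHull_pair,
    convexHull_pair, mem_convexJoin] at hq
  obtain ⟨-, ⟨a1, a2, ha1, ha2, ha, rfl⟩, -, ⟨b1, b2, hb1, hb2, hb, rfl⟩, t1, t2, ht1, ht2, ht, rfl⟩
    := hq
  refine ⟨t1 * a1, t1 * a2, t2 * b1, t2 * b2, by positivity, by positivity, by positivity,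
    by positivity, by linear_combination t1 * ha + t2 * hb + ht, by module⟩

variable {p1 p2 p3 p4}

lemma det_bilinDeriv_pos (h1 : 0 < det (p2 - p1) (p4 - p1)) (h2 : 0 < det (p3 - p2) (p1 - p2))
    (h3 : 0 < det (p4 - p3) (p2 - p3)) (h4 : 0 < det (p1 - p4) (p3 - p4))
    {x : ℝ × ℝ} (hx : x ∈ Icc (0 : ℝ) 1 ×ˢ Icc (0 : ℝ) 1) :
    0 < (bilinDeriv p1 p2 p3 p4 x).det := by
  obtain ⟨⟨hξ0, hξ1⟩, ⟨hη0, hη1⟩⟩ := hx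
  rw [det_bilinDeriv]
  exact weighted_sum_pos (by nlinarith) (by nlinarith) (by nlinarith) (by nlinarith) (by ring)
    h1 h2 h3 h4

lemma injOn_bilinMap (hdet : ∀ x ∈ Icc (0 : ℝ) 1 ×ˢ Icc (0 : ℝ) 1,
      0 < (bilinDeriv p1 p2 p3 p4 x).det) :
    InjOn (bilinMap p1 p2 p3 p4) (Icc (0 : ℝ) 1 ×ˢ Icc (0 : ℝ) 1) := by
  intro u hu v hv huv
  have hsquare : Convex ℝ (Icc (0 : ℝ) 1 ×ˢ Icc (0 : ℝ) 1) :=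
    (convex_Icc 0 1).prod (convex_Icc 0 1)
  have hmid := hsquare.midpoint_mem hu hv
  have hunit : IsUnit (bilinDeriv p1 p2 p3 p4 (midpoint ℝ u v) : ℝ × ℝ →ₗ[ℝ] ℝ × ℝ) :=
    (LinearMap.isUnit_iff_isUnit_det _).mpr (hdet _ hmid).ne'.isUnit
  rw [← sub_eq_zero]
  apply (Module.End.isUnit_iff _ |>.mp hunit).injective
  simpa [bilinMap_sub_bilinMap] using sub_eq_zero.mpr huv

lemma surjOn_bilinMap (h1 : 0 < det (p2 - p1) (p4 - p1)) (h2 : 0 < det (p3 - p2) (p1 - p2))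
    (h3 : 0 < det (p4 - p3) (p2 - p3)) (h4 : 0 < det (p1 - p4) (p3 - p4)) :
    SurjOn (bilinMap p1 p2 p3 p4) (Icc (0 : ℝ) 1 ×ˢ Icc (0 : ℝ) 1)
      (convexHull ℝ {p1, p2, p3, p4}) := by
  intro q hq
  obtain ⟨w1, w2, w3, w4, hw1, hw2, hw3, hw4, hw, rfl⟩ := mem_convexHull_four p1 p2 p3 p4 hq
  obtain ⟨t, hv1, hv2, hv3, hv4, hprod⟩ := exists_balanced_shift hw1 hw2 hw3 hw4 h3 h4 h1 h2
  have hsum : (w1 + t * det (p4 - p3) (p2 - p3)) + (w2 - t * det (p1 - p4) (p3 - p4)) +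
      (w3 + t * det (p2 - p1) (p4 - p1)) + (w4 - t * det (p3 - p2) (p1 - p2)) = 1 := by
    linear_combination hw + t * affine_relation_coeff_sum p1 p2 p3 p4
  refine ⟨_, ⟨⟨by linarith, by linarith⟩, ⟨by linarith, by linarith⟩⟩,
    (bilinMap_of_weights p1 p2 p3 p4 hsum hprod).trans ?_⟩
  linear_combination (norm := module) t • affine_relation p1 p2 p3 p4

end

end BilinearQuad

open BilinearQuad

/-- The bilinear map Φ(ξ, η) = (1−ξ)(1−η) p₁ + ξ(1−η) p₂ + ξη p₃ + (1−ξ)η p₄ maps the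
unit square bijectively onto a strictly convex quadrilateral Q = conv{p₁, p₂, p₃, p₄}
(vertices in counterclockwise order), its Jacobian determinant J is positive on the
square, and ∫_Q f = ∫_{[0,1]²} f(Φ(ξ, η)) J(ξ, η) d(ξ, η) for every f integrable on Q. -/
theorem stmt_18 (p1 p2 p3 p4 : ℝ × ℝ)
    (h1 : 0 < (p2.1 - p1.1) * (p4.2 - p1.2) - (p4.1 - p1.1) * (p2.2 - p1.2))
    (h2 : 0 < (p3.1 - p2.1) * (p1.2 - p2.2) - (p1.1 - p2.1) * (p3.2 - p2.2))
    (h3 : 0 < (p4.1 - p3.1) * (p2.2 - p3.2) - (p2.1 - p3.1) * (p4.2 - p3.2))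
    (h4 : 0 < (p1.1 - p4.1) * (p3.2 - p4.2) - (p3.1 - p4.1) * (p1.2 - p4.2))
    (Φ : ℝ × ℝ → ℝ × ℝ)
    (hΦ : ∀ ξ η : ℝ, Φ (ξ, η) =
      ((1 - ξ) * (1 - η)) • p1 + (ξ * (1 - η)) • p2 + (ξ * η) • p3 + ((1 - ξ) * η) • p4)
    (J : ℝ × ℝ → ℝ)
    (hJ : ∀ p : ℝ × ℝ, J p =
      (fderiv ℝ Φ p (1, 0)).1 * (fderiv ℝ Φ p (0, 1)).2 -
        (fderiv ℝ Φ p (0, 1)).1 * (fderiv ℝ Φ p (1, 0)).2) :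
    Set.BijOn Φ (Set.Icc (0 : ℝ) 1 ×ˢ Set.Icc (0 : ℝ) 1)
      (convexHull ℝ {p1, p2, p3, p4}) ∧
    (∀ p ∈ Set.Icc (0 : ℝ) 1 ×ˢ Set.Icc (0 : ℝ) 1, 0 < J p) ∧
    ∀ f : ℝ × ℝ → ℝ, IntegrableOn f (convexHull ℝ {p1, p2, p3, p4}) →
      ∫ x in convexHull ℝ {p1, p2, p3, p4}, f x =
        ∫ p in Set.Icc (0 : ℝ) 1 ×ˢ Set.Icc (0 : ℝ) 1, f (Φ p) * J p := by
  obtain rfl : Φ = bilinMap p1 p2 p3 p4 := funext fun x => hΦ x.1 x.2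
  have hΦ' (x : ℝ × ℝ) := hasFDerivAt_bilinMap p1 p2 p3 p4 x
  have hJ' (x : ℝ × ℝ) : J x = (bilinDeriv p1 p2 p3 p4 x).det := by
    rw [hJ, (hΦ' x).fderiv, ContinuousLinearMap.det_eq_det_apply, det]
  have hdet (x) (hx : x ∈ Icc (0 : ℝ) 1 ×ˢ Icc (0 : ℝ) 1) := det_bilinDeriv_pos h1 h2 h3 h4 hx
  have hbij : BijOn (bilinMap p1 p2 p3 p4) (Icc (0 : ℝ) 1 ×ˢ Icc (0 : ℝ) 1)
      (convexHull ℝ {p1, p2, p3, p4}) :=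
    ⟨mapsTo_bilinMap p1 p2 p3 p4, injOn_bilinMap hdet, surjOn_bilinMap h1 h2 h3 h4⟩
  refine ⟨hbij, fun x hx => hJ' x ▸ hdet x hx, fun f _ => ?_⟩
  have hsquare : MeasurableSet (Icc (0 : ℝ) 1 ×ˢ Icc (0 : ℝ) 1) :=
    measurableSet_Icc.prod measurableSet_Icc
  rw [← hbij.image_eq, integral_image_eq_integral_abs_det_fderiv_smul volume hsquare
    (fun x _ => (hΦ' x).hasFDerivWithinAt) hbij.injOn f]
  refine setIntegral_congr_fun hsquare fun x hx => ?_
  rw [hJ', abs_of_pos (hdet x hx), smul_eq_mul, mul_comm]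
end
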